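/- Formal harmonic extension with obstruction at order n: let f̃₁ be smooth, homogeneous of degree (0,0) on C^{n+1}∖{0}. Then for each k with 1 ≤ k ≤ n−1 the following inductive step holds: if Δf̃_k = L^{k−1}h with h homogeneous of degree (−k,−k), then setting g = −h/(k(n−k)) and f̃_{k+1} = f̃_k + L^k g, one has Δf̃_{k+1} = O(L^k), i.e. Δf̃_{k+1} is divisible by L^k. -/

import Mathlib

open Complex

/-- The Wirtinger derivative `∂/∂ζ_j` of a function on `ℂ^m`. -/
noncomputable def wirtingerD {m : ℕ} (j : Fin m) (f : (Fin m → ℂ) → ℂ)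
    (z : Fin m → ℂ) : ℂ :=
  (1 / 2) * (fderiv ℝ f z (Pi.single j 1) - Complex.I * fderiv ℝ f z (Pi.single j Complex.I))

/-- The Wirtinger derivative `∂/∂ζ̄_j` of a function on `ℂ^m`. -/
noncomputable def wirtingerDBar {m : ℕ} (j : Fin m) (f : (Fin m → ℂ) → ℂ)
    (z : Fin m → ℂ) : ℂ :=
  (1 / 2) * (fderiv ℝ f z (Pi.single j 1) + Complex.I * fderiv ℝ f z (Pi.single j Complex.I))

/-- Signs of the Lorentz-hermitian form: `+1` for `j = 0`, `-1` otherwise. -/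
def lorentzSign {n : ℕ} (j : Fin (n + 1)) : ℂ := if j = 0 then 1 else -1

/-- The Lorentz-hermitian Laplacian
`Δ = ∂_{ζ0}∂_{ζ̄0} − Σ_{j=1}^n ∂_{ζj}∂_{ζ̄j}` on `ℂ^{n+1}`. -/
noncomputable def ambientLap (n : ℕ) (f : (Fin (n + 1) → ℂ) → ℂ) :
    (Fin (n + 1) → ℂ) → ℂ :=
  fun z => ∑ j : Fin (n + 1), lorentzSign j * wirtingerD j (wirtingerDBar j f) z

/-- The hermitian form `L(ζ) = |ζ0|² − |ζ1|² − ⋯ − |ζn|²`. -/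
noncomputable def lorentzForm (n : ℕ) (z : Fin (n + 1) → ℂ) : ℂ :=
  ∑ j : Fin (n + 1), lorentzSign j * (Complex.normSq (z j) : ℂ)

/-- The holomorphic Euler operator `Z = Σ_j ζ_j ∂_{ζj}`. -/
noncomputable def eulerZ {n : ℕ} (f : (Fin (n + 1) → ℂ) → ℂ) (z : Fin (n + 1) → ℂ) : ℂ :=
  ∑ j : Fin (n + 1), z j * wirtingerD j f z

/-- The conjugate Euler operator `Z̄ = Σ_j ζ̄_j ∂_{ζ̄j}`. -/
noncomputable def eulerZBar {n : ℕ} (f : (Fin (n + 1) → ℂ) → ℂ) (z : Fin (n + 1) → ℂ) : ℂ :=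
  ∑ j : Fin (n + 1), (starRingEnd ℂ) (z j) * wirtingerDBar j f z

/-- `f` is homogeneous of bidegree `(p,q) ∈ ℤ²`:  `f(λζ) = λ^p λ̄^q f(ζ)` for `λ ∈ ℂ*`. -/
def BiHomogeneous {n : ℕ} (f : (Fin (n + 1) → ℂ) → ℂ) (p q : ℤ) : Prop :=
  ∀ (lam : ℂ), lam ≠ 0 → ∀ z : Fin (n + 1) → ℂ,
    f (lam • z) = lam ^ p * ((starRingEnd ℂ) lam) ^ q * f z

section basic
variable {m : ℕ} (j : Fin m) {F G : (Fin m → ℂ) → ℂ} {z : Fin m → ℂ}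

lemma wirtingerD_congr (h : F =ᶠ[nhds z] G) : wirtingerD j F z = wirtingerD j G z := by
  unfold wirtingerD; rw [h.fderiv_eq]

lemma wirtingerDBar_congr (h : F =ᶠ[nhds z] G) : wirtingerDBar j F z = wirtingerDBar j G z := by
  unfold wirtingerDBar; rw [h.fderiv_eq]

lemma wirtingerD_add (hF : DifferentiableAt ℝ F z) (hG : DifferentiableAt ℝ G z) :
    wirtingerD j (fun w => F w + G w) z = wirtingerD j F z + wirtingerD j G z := by
  unfold wirtingerD; rw [fderiv_fun_add hF hG]; simp; ring

lemma wirtingerDBar_add (hF : DifferentiableAt ℝ F z) (hG : DifferentiableAt ℝ G z) :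
    wirtingerDBar j (fun w => F w + G w) z = wirtingerDBar j F z + wirtingerDBar j G z := by
  unfold wirtingerDBar; rw [fderiv_fun_add hF hG]; simp; ring

lemma wirtingerD_mul (hF : DifferentiableAt ℝ F z) (hG : DifferentiableAt ℝ G z) :
    wirtingerD j (fun w => F w * G w) z
      = wirtingerD j F z * G z + F z * wirtingerD j G z := by
  unfold wirtingerD; rw [fderiv_fun_mul hF hG]; simp [smul_eq_mul]; ring

lemma wirtingerDBar_mul (hF : DifferentiableAt ℝ F z) (hG : DifferentiableAt ℝ G z) :
    wirtingerDBar j (fun w => F w * G w) z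
      = wirtingerDBar j F z * G z + F z * wirtingerDBar j G z := by
  unfold wirtingerDBar; rw [fderiv_fun_mul hF hG]; simp [smul_eq_mul]; ring

lemma wirtingerD_const_mul (c : ℂ) (hF : DifferentiableAt ℝ F z) :
    wirtingerD j (fun w => c * F w) z = c * wirtingerD j F z := by
  unfold wirtingerD; rw [fderiv_const_mul hF]; simp [smul_eq_mul]; ring

lemma wirtingerDBar_const_mul (c : ℂ) (hF : DifferentiableAt ℝ F z) :
    wirtingerDBar j (fun w => c * F w) z = c * wirtingerDBar j F z := by
  unfold wirtingerDBar; rw [fderiv_const_mul hF]; simp [smul_eq_mul]; ring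

lemma wirtingerD_sum {ι : Type*} (s : Finset ι) (f : ι → (Fin m → ℂ) → ℂ)
    (h : ∀ i ∈ s, DifferentiableAt ℝ (f i) z) :
    wirtingerD j (fun w => ∑ i ∈ s, f i w) z = ∑ i ∈ s, wirtingerD j (f i) z := by
  unfold wirtingerD; rw [fderiv_fun_sum h]
  simp only [ContinuousLinearMap.coe_sum', Finset.sum_apply, Finset.mul_sum,
    ← Finset.sum_sub_distrib]

lemma wirtingerDBar_sum {ι : Type*} (s : Finset ι) (f : ι → (Fin m → ℂ) → ℂ)
    (h : ∀ i ∈ s, DifferentiableAt ℝ (f i) z) :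
    wirtingerDBar j (fun w => ∑ i ∈ s, f i w) z = ∑ i ∈ s, wirtingerDBar j (f i) z := by
  unfold wirtingerDBar; rw [fderiv_fun_sum h]
  simp only [ContinuousLinearMap.coe_sum', Finset.sum_apply, Finset.mul_sum,
    ← Finset.sum_add_distrib]

lemma contDiffAt_wirtingerD (hF : ContDiffAt ℝ (⊤ : ℕ∞) F z) :
    ContDiffAt ℝ (⊤ : ℕ∞) (wirtingerD j F) z := by
  have hd : ContDiffAt ℝ (⊤ : ℕ∞) (fderiv ℝ F) z := hF.fderiv_right (by simp)
  exact contDiffAt_const.mul ((hd.clm_apply contDiffAt_const).sub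
    (contDiffAt_const.mul (hd.clm_apply contDiffAt_const)))

lemma contDiffAt_wirtingerDBar (hF : ContDiffAt ℝ (⊤ : ℕ∞) F z) :
    ContDiffAt ℝ (⊤ : ℕ∞) (wirtingerDBar j F) z := by
  have hd : ContDiffAt ℝ (⊤ : ℕ∞) (fderiv ℝ F) z := hF.fderiv_right (by simp)
  exact contDiffAt_const.mul ((hd.clm_apply contDiffAt_const).add
    (contDiffAt_const.mul (hd.clm_apply contDiffAt_const)))

end basic


section coord
variable {m : ℕ} {z : Fin m → ℂ}

lemma hasFDerivAt_coord (i : Fin m) (z : Fin m → ℂ) :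
    HasFDerivAt (fun w : Fin m → ℂ => w i)
      (ContinuousLinearMap.proj (R := ℝ) (φ := fun _ : Fin m => ℂ) i) z := by
  exact (ContinuousLinearMap.proj (R := ℝ) (φ := fun _ : Fin m => ℂ) i).hasFDerivAt

lemma fderiv_coord_apply (i : Fin m) (z v : Fin m → ℂ) :
    fderiv ℝ (fun w : Fin m → ℂ => w i) z v = v i := by
  rw [(hasFDerivAt_coord i z).fderiv]; rfl

lemma differentiableAt_coord (i : Fin m) (z : Fin m → ℂ) :
    DifferentiableAt ℝ (fun w : Fin m → ℂ => w i) z :=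
  (hasFDerivAt_coord i z).differentiableAt

lemma hasFDerivAt_conj_coord (i : Fin m) (z : Fin m → ℂ) :
    HasFDerivAt (fun w : Fin m → ℂ => (starRingEnd ℂ) (w i))
      ((Complex.conjCLE.toContinuousLinearMap).comp
        (ContinuousLinearMap.proj (R := ℝ) (φ := fun _ : Fin m => ℂ) i)) z := by
  exact ((Complex.conjCLE.toContinuousLinearMap).comp
    (ContinuousLinearMap.proj (R := ℝ) (φ := fun _ : Fin m => ℂ) i)).hasFDerivAt

lemma fderiv_conj_coord_apply (i : Fin m) (z v : Fin m → ℂ) :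
    fderiv ℝ (fun w : Fin m → ℂ => (starRingEnd ℂ) (w i)) z v = (starRingEnd ℂ) (v i) := by
  rw [(hasFDerivAt_conj_coord i z).fderiv]; rfl

lemma differentiableAt_conj_coord (i : Fin m) (z : Fin m → ℂ) :
    DifferentiableAt ℝ (fun w : Fin m → ℂ => (starRingEnd ℂ) (w i)) z :=
  (hasFDerivAt_conj_coord i z).differentiableAt

lemma wirtingerD_coord (i j : Fin m) :
    wirtingerD j (fun w => w i) z = if i = j then 1 else 0 := by
  unfold wirtingerD
  rw [fderiv_coord_apply, fderiv_coord_apply]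
  by_cases h : i = j <;> simp [h, Pi.single_apply, Complex.I_mul_I] <;> ring

lemma wirtingerDBar_coord (i j : Fin m) :
    wirtingerDBar j (fun w => w i) z = 0 := by
  unfold wirtingerDBar
  rw [fderiv_coord_apply, fderiv_coord_apply]
  by_cases h : i = j <;> simp [h, Pi.single_apply, Complex.I_mul_I]

lemma wirtingerD_conj_coord (i j : Fin m) :
    wirtingerD j (fun w => (starRingEnd ℂ) (w i)) z = 0 := by
  unfold wirtingerD
  rw [fderiv_conj_coord_apply, fderiv_conj_coord_apply]
  by_cases h : i = j <;> simp [h, Pi.single_apply]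

lemma wirtingerDBar_conj_coord (i j : Fin m) :
    wirtingerDBar j (fun w => (starRingEnd ℂ) (w i)) z = if i = j then 1 else 0 := by
  unfold wirtingerDBar
  rw [fderiv_conj_coord_apply, fderiv_conj_coord_apply]
  by_cases h : i = j <;> simp [h, Pi.single_apply] <;> ring

end coord


section pow
variable {m : ℕ} (j : Fin m) {F : (Fin m → ℂ) → ℂ} {z : Fin m → ℂ}

lemma cast_mul_pow_sub_one (p : ℕ) (a : ℂ) : (p : ℂ) * a ^ (p - 1) * a = (p : ℂ) * a ^ p := by
  cases p with
  | zero => simp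
  | succ q => simp [pow_succ]; ring

lemma wirtingerD_pow (hF : DifferentiableAt ℝ F z) (p : ℕ) :
    wirtingerD j (fun w => F w ^ p) z = (p : ℂ) * F z ^ (p - 1) * wirtingerD j F z := by
  induction p with
  | zero =>
      have : wirtingerD j (fun _ : Fin m → ℂ => (1 : ℂ)) z = 0 := by
        unfold wirtingerD; simp [fderiv_const]
      simpa using this
  | succ q ih =>
      have h1 : wirtingerD j (fun w => F w * F w ^ q) z
          = wirtingerD j F z * F z ^ q + F z * wirtingerD j (fun w => F w ^ q) z :=
        wirtingerD_mul j hF (hF.pow q)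
      have h2 : wirtingerD j (fun w => F w ^ (q + 1)) z
          = wirtingerD j (fun w => F w * F w ^ q) z := by
        simp only [pow_succ]; congr 1; funext w; ring
      rw [h2, h1, ih]
      rcases Nat.eq_zero_or_pos q with hq | hq
      · subst hq; simp
      · have : q - 1 + 1 = q := Nat.succ_pred_eq_of_pos hq
        rw [show (q + 1 : ℕ) - 1 = q from rfl]
        push_cast
        calc wirtingerD j F z * F z ^ q + F z * ((q : ℂ) * F z ^ (q - 1) * wirtingerD j F z)
            = wirtingerD j F z * F z ^ q + (q : ℂ) * (F z ^ (q-1) * F z) * wirtingerD j F z := by ring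
          _ = ((q : ℂ) + 1) * F z ^ q * wirtingerD j F z := by
              rw [← pow_succ, this]; ring

lemma wirtingerDBar_pow (hF : DifferentiableAt ℝ F z) (p : ℕ) :
    wirtingerDBar j (fun w => F w ^ p) z = (p : ℂ) * F z ^ (p - 1) * wirtingerDBar j F z := by
  induction p with
  | zero =>
      have : wirtingerDBar j (fun _ : Fin m → ℂ => (1 : ℂ)) z = 0 := by
        unfold wirtingerDBar; simp [fderiv_const]
      simpa using this
  | succ q ih =>
      have h1 : wirtingerDBar j (fun w => F w * F w ^ q) z
          = wirtingerDBar j F z * F z ^ q + F z * wirtingerDBar j (fun w => F w ^ q) z :=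
        wirtingerDBar_mul j hF (hF.pow q)
      have h2 : wirtingerDBar j (fun w => F w ^ (q + 1)) z
          = wirtingerDBar j (fun w => F w * F w ^ q) z := by
        simp only [pow_succ]; congr 1; funext w; ring
      rw [h2, h1, ih]
      rcases Nat.eq_zero_or_pos q with hq | hq
      · subst hq; simp
      · have : q - 1 + 1 = q := Nat.succ_pred_eq_of_pos hq
        rw [show (q + 1 : ℕ) - 1 = q from rfl]
        push_cast
        calc wirtingerDBar j F z * F z ^ q + F z * ((q : ℂ) * F z ^ (q - 1) * wirtingerDBar j F z)
            = wirtingerDBar j F z * F z ^ q + (q : ℂ) * (F z ^ (q-1) * F z) * wirtingerDBar j F z := by ring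
          _ = ((q : ℂ) + 1) * F z ^ q * wirtingerDBar j F z := by
              rw [← pow_succ, this]; ring

end pow

section lorentz
variable {n : ℕ} {z : Fin (n + 1) → ℂ}

lemma lorentzForm_eq (n : ℕ) :
    lorentzForm n = fun z : Fin (n + 1) → ℂ =>
      ∑ i : Fin (n + 1), lorentzSign i * (z i * (starRingEnd ℂ) (z i)) := by
  funext z; unfold lorentzForm; simp [Complex.mul_conj]

lemma lorentzSign_cases {n : ℕ} (j : Fin (n + 1)) :
    lorentzSign j = 1 ∨ lorentzSign j = -1 := by
  unfold lorentzSign; split <;> simp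

lemma differentiable_lorentzForm : Differentiable ℝ (lorentzForm n) := by
  rw [lorentzForm_eq]
  exact Differentiable.fun_sum fun i _ => (differentiable_const _).mul
    (Differentiable.mul (fun z => differentiableAt_coord i z)
      (fun z => differentiableAt_conj_coord i z))

lemma contDiff_lorentzForm : ContDiff ℝ (⊤ : ℕ∞) (lorentzForm n) := by
  rw [lorentzForm_eq]
  apply ContDiff.sum fun i _ => ?_
  apply ContDiff.mul contDiff_const
  apply ContDiff.mul
  · exact (ContinuousLinearMap.proj (R := ℝ) (φ := fun _ : Fin (n+1) => ℂ) i).contDiff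
  · exact ((Complex.conjCLE.toContinuousLinearMap).comp
      (ContinuousLinearMap.proj (R := ℝ) (φ := fun _ : Fin (n+1) => ℂ) i)).contDiff

lemma wirtingerD_lorentz (j : Fin (n + 1)) :
    wirtingerD j (lorentzForm n) z = lorentzSign j * (starRingEnd ℂ) (z j) := by
  rw [lorentzForm_eq]
  rw [wirtingerD_sum j Finset.univ _ (fun i _ => (differentiableAt_const _).fun_mul
    ((differentiableAt_coord i z).fun_mul (differentiableAt_conj_coord i z)))]
  have : ∀ i : Fin (n + 1),
      wirtingerD j (fun w => lorentzSign i * (w i * (starRingEnd ℂ) (w i))) z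
        = lorentzSign i * ((if i = j then 1 else 0) * (starRingEnd ℂ) (z i)) := by
    intro i
    rw [wirtingerD_const_mul j _ ((differentiableAt_coord i z).fun_mul (differentiableAt_conj_coord i z)),
      wirtingerD_mul j (differentiableAt_coord i z) (differentiableAt_conj_coord i z),
      wirtingerD_coord, wirtingerD_conj_coord]
    ring
  simp only [this]
  rw [Finset.sum_eq_single j] <;> simp +contextual

lemma wirtingerDBar_lorentz (j : Fin (n + 1)) :
    wirtingerDBar j (lorentzForm n) z = lorentzSign j * z j := by
  rw [lorentzForm_eq]
  rw [wirtingerDBar_sum j Finset.univ _ (fun i _ => (differentiableAt_const _).fun_mul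
    ((differentiableAt_coord i z).fun_mul (differentiableAt_conj_coord i z)))]
  have : ∀ i : Fin (n + 1),
      wirtingerDBar j (fun w => lorentzSign i * (w i * (starRingEnd ℂ) (w i))) z
        = lorentzSign i * (z i * (if i = j then 1 else 0)) := by
    intro i
    rw [wirtingerDBar_const_mul j _ ((differentiableAt_coord i z).fun_mul (differentiableAt_conj_coord i z)),
      wirtingerDBar_mul j (differentiableAt_coord i z) (differentiableAt_conj_coord i z),
      wirtingerDBar_coord, wirtingerDBar_conj_coord]
    ring
  simp only [this]
  rw [Finset.sum_eq_single j] <;> simp +contextual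

end lorentz


section euler
variable {n : ℕ} {u : (Fin (n + 1) → ℂ) → ℂ} {z : Fin (n + 1) → ℂ}

lemma scalar_split (w A B : ℂ) :
    w * ((1 / 2) * (A - I * B)) + (starRingEnd ℂ) w * ((1 / 2) * (A + I * B))
      = (w.re : ℂ) * A + (w.im : ℂ) * B := by
  have hw : (w.re : ℂ) + (w.im : ℂ) * I = w := Complex.re_add_im w
  have hcw : (starRingEnd ℂ) w = (w.re : ℂ) - (w.im : ℂ) * I := by
    nth_rewrite 1 [← Complex.re_add_im w]
    rw [map_add, map_mul, Complex.conj_ofReal, Complex.conj_ofReal, Complex.conj_I]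
    ring
  have hI : (I : ℂ) ^ 2 = -1 := Complex.I_sq
  linear_combination (-(1 / 2 : ℂ) * (A - I * B)) * hw + ((1 / 2 : ℂ) * (A + I * B)) * hcw +
    (-(w.im : ℂ) * B) * hI

lemma pi_single_decomp {m : ℕ} (j : Fin m) (w : ℂ) :
    (Pi.single j w : Fin m → ℂ)
      = w.re • (Pi.single j (1 : ℂ) : Fin m → ℂ) + w.im • (Pi.single j I : Fin m → ℂ) := by
  funext i
  by_cases h : i = j
  · subst h
    simp [Pi.single_eq_same, Complex.real_smul]
  · simp [Pi.single_eq_of_ne h]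

lemma euler_eq_fderiv (hu : DifferentiableAt ℝ u z) :
    eulerZ u z + eulerZBar u z = fderiv ℝ u z z := by
  have key : ∀ j : Fin (n + 1),
      z j * wirtingerD j u z + (starRingEnd ℂ) (z j) * wirtingerDBar j u z
        = fderiv ℝ u z (Pi.single j (z j)) := by
    intro j
    have hr : fderiv ℝ u z (Pi.single j (z j))
        = ((z j).re : ℂ) * fderiv ℝ u z (Pi.single j 1)
          + ((z j).im : ℂ) * fderiv ℝ u z (Pi.single j I) := by
      rw [pi_single_decomp j (z j), map_add, map_smul, map_smul, Complex.real_smul,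
        Complex.real_smul]
    rw [hr]
    unfold wirtingerD wirtingerDBar
    exact scalar_split _ _ _
  unfold eulerZ eulerZBar
  rw [← Finset.sum_add_distrib]
  simp only [key]
  rw [← map_sum, Finset.univ_sum_single]

lemma euler_identity (p : ℕ) (hu : DifferentiableAt ℝ u z)
    (hhom : BiHomogeneous u (-(p : ℤ)) (-(p : ℤ))) :
    eulerZ u z + eulerZBar u z = (-(2 * p : ℂ)) * u z := by
  set mm : ℤ := -(2 * (p : ℤ)) with hmm
  have hγ : HasDerivAt (fun t : ℝ => (1 + t) • z) z 0 := by
    have := ((hasDerivAt_id (0 : ℝ)).const_add 1).smul_const z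
    simpa using this
  have h1 : HasDerivAt (fun t : ℝ => u ((1 + t) • z)) (fderiv ℝ u z z) 0 := by
    have hu' : HasFDerivAt u (fderiv ℝ u z) ((fun t : ℝ => (1 + t) • z) 0) := by
      simpa using hu.hasFDerivAt
    exact hu'.comp_hasDerivAt 0 hγ
  have hpow : HasDerivAt (fun t : ℝ => ((1 : ℂ) + (t : ℂ)) ^ mm * u z) ((mm : ℂ) * u z) 0 := by
    have hin : HasDerivAt (fun w : ℂ => 1 + w) 1 ((0 : ℝ) : ℂ) := by
      simpa using (hasDerivAt_id ((0 : ℝ) : ℂ)).const_add 1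
    have h2 : HasDerivAt (fun x : ℂ => x ^ mm) ((mm : ℂ) * 1 ^ (mm - 1))
        ((fun w : ℂ => 1 + w) ((0 : ℝ) : ℂ)) := by
      simpa using hasDerivAt_zpow mm (1 : ℂ) (Or.inl one_ne_zero)
    have h3 := (h2.comp _ hin).comp_ofReal
    have h4 : HasDerivAt (fun t : ℝ => ((1 : ℂ) + (t : ℂ)) ^ mm) ((mm : ℂ)) 0 := by
      simpa [Function.comp] using h3
    simpa using h4.mul_const (u z)
  have hEv : (fun t : ℝ => u ((1 + t) • z))
      =ᶠ[nhds (0 : ℝ)] (fun t : ℝ => ((1 : ℂ) + (t : ℂ)) ^ mm * u z) := by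
    have hev : ∀ᶠ t : ℝ in nhds 0, (-1 : ℝ) < t := eventually_gt_nhds (by norm_num)
    filter_upwards [hev] with t ht
    have hne : ((1 + t : ℝ) : ℂ) ≠ 0 := by
      simp only [ne_eq, Complex.ofReal_eq_zero]
      linarith
    have hsm : (1 + t) • z = ((1 + t : ℝ) : ℂ) • z := by
      funext i
      simp [Pi.smul_apply, Complex.real_smul]
    rw [hsm, hhom _ hne z, Complex.conj_ofReal, ← zpow_add₀ hne,
      show (-(p : ℤ)) + (-(p : ℤ)) = mm by rw [hmm]; ring]
    push_cast
    ring
  have h5 : HasDerivAt (fun t : ℝ => u ((1 + t) • z)) ((mm : ℂ) * u z) 0 :=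
    hpow.congr_of_eventuallyEq hEv
  have h6 : fderiv ℝ u z z = (mm : ℂ) * u z := h1.unique h5
  rw [euler_eq_fderiv hu, h6, hmm]
  push_cast
  ring
end euler


section lap
variable {n : ℕ} {S : Set (Fin (n + 1) → ℂ)} {z : Fin (n + 1) → ℂ}

lemma ambientLap_add (hS : IsOpen S) (hzS : z ∈ S) {F G : (Fin (n + 1) → ℂ) → ℂ}
    (hF : ContDiffOn ℝ (⊤ : ℕ∞) F S) (hG : ContDiffOn ℝ (⊤ : ℕ∞) G S) :
    ambientLap n (fun w => F w + G w) z = ambientLap n F z + ambientLap n G z := by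
  unfold ambientLap
  rw [← Finset.sum_add_distrib]
  apply Finset.sum_congr rfl
  intro j _
  have hev : wirtingerDBar j (fun w => F w + G w)
      =ᶠ[nhds z] fun w => wirtingerDBar j F w + wirtingerDBar j G w := by
    filter_upwards [hS.mem_nhds hzS] with w hw
    exact wirtingerDBar_add j ((hF.contDiffAt (hS.mem_nhds hw)).differentiableAt (by simp))
      ((hG.contDiffAt (hS.mem_nhds hw)).differentiableAt (by simp))
  rw [wirtingerD_congr j hev,
    wirtingerD_add j
      ((contDiffAt_wirtingerDBar j (hF.contDiffAt (hS.mem_nhds hzS))).differentiableAt (by simp))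
      ((contDiffAt_wirtingerDBar j (hG.contDiffAt (hS.mem_nhds hzS))).differentiableAt (by simp)),
    mul_add]

lemma contDiffOn_ambientLap (hS : IsOpen S) {g : (Fin (n + 1) → ℂ) → ℂ}
    (hg : ContDiffOn ℝ (⊤ : ℕ∞) g S) : ContDiffOn ℝ (⊤ : ℕ∞) (ambientLap n g) S := by
  intro z hz
  apply ContDiffAt.contDiffWithinAt
  unfold ambientLap
  apply ContDiffAt.sum
  intro j _
  exact contDiffAt_const.mul
    (contDiffAt_wirtingerD j (contDiffAt_wirtingerDBar j (hg.contDiffAt (hS.mem_nhds hz))))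

lemma lap_pow_mul (hS : IsOpen S) (hzS : z ∈ S) {g : (Fin (n + 1) → ℂ) → ℂ}
    (hg : ContDiffOn ℝ (⊤ : ℕ∞) g S) (K : ℕ) :
    ambientLap n (fun w => lorentzForm n w ^ (K + 1) * g w) z
      = ((K : ℂ) + 1) * ((K : ℂ) + (n : ℂ) + 1) * lorentzForm n z ^ K * g z
        + ((K : ℂ) + 1) * lorentzForm n z ^ K * (eulerZ g z + eulerZBar g z)
        + lorentzForm n z ^ (K + 1) * ambientLap n g z := by
  have hgd : ∀ w ∈ S, DifferentiableAt ℝ g w := fun w hw =>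
    (hg.contDiffAt (hS.mem_nhds hw)).differentiableAt (by simp)
  have hLd : ∀ w, DifferentiableAt ℝ (lorentzForm n) w := fun w => differentiable_lorentzForm w
  have key : ∀ j : Fin (n + 1),
      lorentzSign j * wirtingerD j (wirtingerDBar j
          (fun w => lorentzForm n w ^ (K + 1) * g w)) z
        = ((K : ℂ) + 1) * (K : ℂ) * (lorentzForm n z ^ (K - 1) * g z)
              * (lorentzSign j * (z j * (starRingEnd ℂ) (z j)))
          + ((K : ℂ) + 1) * (lorentzForm n z ^ K * g z)
          + ((K : ℂ) + 1) * lorentzForm n z ^ K * (z j * wirtingerD j g z)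
          + ((K : ℂ) + 1) * lorentzForm n z ^ K
              * ((starRingEnd ℂ) (z j) * wirtingerDBar j g z)
          + lorentzForm n z ^ (K + 1)
              * (lorentzSign j * wirtingerD j (wirtingerDBar j g) z) := by
    intro j
    have e1 : wirtingerDBar j (fun w => lorentzForm n w ^ (K + 1) * g w) =ᶠ[nhds z]
        (fun w => (((K : ℂ) + 1) * (lorentzForm n w ^ K * (lorentzSign j * w j))) * g w
          + (lorentzForm n w ^ (K + 1)) * wirtingerDBar j g w) := by
      filter_upwards [hS.mem_nhds hzS] with w hw
      rw [wirtingerDBar_mul j ((hLd w).fun_pow _) (hgd w hw),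
        wirtingerDBar_pow j (hLd w) (K + 1), wirtingerDBar_lorentz]
      push_cast [Nat.add_sub_cancel]
      ring
    have hAd : DifferentiableAt ℝ
        (fun w => ((K : ℂ) + 1) * (lorentzForm n w ^ K * (lorentzSign j * w j))) z :=
      (differentiableAt_const _).mul (((hLd z).pow K).mul
        ((differentiableAt_const _).mul (differentiableAt_coord j z)))
    have hBd : DifferentiableAt ℝ (fun w => lorentzForm n w ^ (K + 1)) z := (hLd z).pow _
    have hDBgd : DifferentiableAt ℝ (wirtingerDBar j g) z :=
      (contDiffAt_wirtingerDBar j (hg.contDiffAt (hS.mem_nhds hzS))).differentiableAt (by simp)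
    rw [wirtingerD_congr j e1,
      wirtingerD_add j (hAd.fun_mul (hgd z hzS)) (hBd.fun_mul hDBgd),
      wirtingerD_mul j hAd (hgd z hzS),
      wirtingerD_mul j hBd hDBgd,
      wirtingerD_const_mul j _ (((hLd z).fun_pow K).fun_mul
        ((differentiableAt_const _).fun_mul (differentiableAt_coord j z))),
      wirtingerD_mul j ((hLd z).fun_pow K)
        ((differentiableAt_const _).fun_mul (differentiableAt_coord j z)),
      wirtingerD_pow j (hLd z) K,
      wirtingerD_lorentz,
      wirtingerD_const_mul j _ (differentiableAt_coord j z),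
      wirtingerD_coord,
      wirtingerD_pow j (hLd z) (K + 1),
      wirtingerD_lorentz]
    push_cast [Nat.add_sub_cancel]
    rcases lorentzSign_cases j with hs | hs <;> rw [hs] <;> simp <;> ring
  unfold ambientLap
  rw [Finset.sum_congr rfl fun j _ => key j]
  rw [Finset.sum_add_distrib, Finset.sum_add_distrib, Finset.sum_add_distrib,
    Finset.sum_add_distrib]
  have hT1 : ∑ j : Fin (n + 1), ((K : ℂ) + 1) * (K : ℂ) * (lorentzForm n z ^ (K - 1) * g z)
      * (lorentzSign j * (z j * (starRingEnd ℂ) (z j)))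
      = ((K : ℂ) + 1) * (K : ℂ) * (lorentzForm n z ^ (K - 1) * g z) * lorentzForm n z := by
    rw [← Finset.mul_sum]
    congr 1
    exact (congrFun (lorentzForm_eq n) z).symm
  have hT2 : ∑ _j : Fin (n + 1), ((K : ℂ) + 1) * (lorentzForm n z ^ K * g z)
      = ((n : ℂ) + 1) * (((K : ℂ) + 1) * (lorentzForm n z ^ K * g z)) := by
    rw [Finset.sum_const, Finset.card_univ, Fintype.card_fin, nsmul_eq_mul]
    push_cast
    ring
  have hT3 : ∑ j : Fin (n + 1), ((K : ℂ) + 1) * lorentzForm n z ^ K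
      * (z j * wirtingerD j g z)
      = ((K : ℂ) + 1) * lorentzForm n z ^ K * eulerZ g z := by
    rw [← Finset.mul_sum]; rfl
  have hT4 : ∑ j : Fin (n + 1), ((K : ℂ) + 1) * lorentzForm n z ^ K
      * ((starRingEnd ℂ) (z j) * wirtingerDBar j g z)
      = ((K : ℂ) + 1) * lorentzForm n z ^ K * eulerZBar g z := by
    rw [← Finset.mul_sum]; rfl
  have hT5 : ∑ j : Fin (n + 1), lorentzForm n z ^ (K + 1)
      * (lorentzSign j * wirtingerD j (wirtingerDBar j g) z)
      = lorentzForm n z ^ (K + 1)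
        * ∑ j : Fin (n + 1), lorentzSign j * wirtingerD j (wirtingerDBar j g) z := by
    rw [← Finset.mul_sum]
  rw [hT1, hT2, hT3, hT4, hT5]
  linear_combination (((K : ℂ) + 1) * g z) * cast_mul_pow_sub_one K (lorentzForm n z)

end lap


/-- the inductive step of the formal harmonic extension.  For `1 ≤ k ≤ n−1`,
if `f̃ₖ` is smooth on `ℂ^{n+1}∖{0}`, homogeneous of degree `(0,0)`, and
`Δf̃ₖ = L^{k−1} h` with `h` smooth homogeneous of degree `(−k,−k)`, then
`f̃_{k+1} := f̃ₖ + L^k g` with `g := −h/(k(n−k))` satisfies `Δf̃_{k+1} = O(L^k)`,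
i.e. `Δf̃_{k+1}` is divisible by `L^k` as a smooth function. -/
theorem harmonic_extension_step (n k : ℕ) (hn : 0 < n) (hk : 1 ≤ k) (hkn : k ≤ n - 1)
    (ftil h : (Fin (n + 1) → ℂ) → ℂ)
    (hfsm : ContDiffOn ℝ (⊤ : ℕ∞) ftil {z : Fin (n + 1) → ℂ | z ≠ 0})
    (hhsm : ContDiffOn ℝ (⊤ : ℕ∞) h {z : Fin (n + 1) → ℂ | z ≠ 0})
    (hfhom : BiHomogeneous ftil 0 0)
    (hhhom : BiHomogeneous h (-(k : ℤ)) (-(k : ℤ)))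
    (heq : ∀ z : Fin (n + 1) → ℂ, z ≠ 0 →
      ambientLap n ftil z = lorentzForm n z ^ (k - 1) * h z) :
    ∃ r : (Fin (n + 1) → ℂ) → ℂ,
      ContDiffOn ℝ (⊤ : ℕ∞) r {z : Fin (n + 1) → ℂ | z ≠ 0} ∧
      ∀ z : Fin (n + 1) → ℂ, z ≠ 0 →
        ambientLap n
          (fun w => ftil w + lorentzForm n w ^ k *
            (-(h w) / ((k : ℂ) * ((n : ℂ) - (k : ℂ))))) z
          = lorentzForm n z ^ k * r z := by
  obtain ⟨K, rfl⟩ : ∃ K, k = K + 1 := ⟨k - 1, (Nat.succ_pred_eq_of_pos hk).symm⟩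
  have hS : IsOpen {z : Fin (n + 1) → ℂ | z ≠ 0} := isOpen_ne
  have hd : (((K + 1 : ℕ)) : ℂ) * ((n : ℂ) - (((K + 1 : ℕ)) : ℂ)) ≠ 0 := by
    have h1 : (((K + 1 : ℕ)) : ℂ) ≠ 0 := Nat.cast_ne_zero.mpr (Nat.succ_ne_zero K)
    have h2 : (n : ℂ) ≠ (((K + 1 : ℕ)) : ℂ) := by
      have hne : n ≠ K + 1 := by omega
      exact fun hc => hne (Nat.cast_inj.mp hc)
    exact mul_ne_zero h1 (sub_ne_zero.mpr h2)
  set g : (Fin (n + 1) → ℂ) → ℂ :=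
    fun w => -(h w) / ((((K + 1 : ℕ)) : ℂ) * ((n : ℂ) - (((K + 1 : ℕ)) : ℂ))) with hgdef
  have hgsm : ContDiffOn ℝ (⊤ : ℕ∞) g {z : Fin (n + 1) → ℂ | z ≠ 0} := hhsm.neg.div_const _
  have hghom : BiHomogeneous g (-((K + 1 : ℕ) : ℤ)) (-((K + 1 : ℕ) : ℤ)) := by
    intro lam hlam z
    simp only [hgdef]
    rw [hhhom lam hlam z]
    ring
  refine ⟨ambientLap n g, contDiffOn_ambientLap hS hgsm, ?_⟩
  intro z hz
  have hzS : z ∈ {z : Fin (n + 1) → ℂ | z ≠ 0} := hz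
  have hGsm : ContDiffOn ℝ (⊤ : ℕ∞) (fun w => lorentzForm n w ^ (K + 1) * g w)
      {z : Fin (n + 1) → ℂ | z ≠ 0} :=
    ((contDiff_lorentzForm.pow (K + 1)).contDiffOn).mul hgsm
  have e0 : ambientLap n (fun w => ftil w + lorentzForm n w ^ (K + 1) * g w) z
      = ambientLap n ftil z + ambientLap n (fun w => lorentzForm n w ^ (K + 1) * g w) z :=
    ambientLap_add hS hzS hfsm hGsm
  have e1 := lap_pow_mul hS hzS hgsm K
  have e2 : eulerZ g z + eulerZBar g z = (-(2 * ((K + 1 : ℕ) : ℂ))) * g z :=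
    euler_identity (K + 1) ((hgsm.contDiffAt (hS.mem_nhds hzS)).differentiableAt (by simp)) hghom
  have e3 : ambientLap n ftil z = lorentzForm n z ^ K * h z := by
    simpa [Nat.add_sub_cancel] using heq z hz
  have hgz : g z = -(h z) / ((((K + 1 : ℕ)) : ℂ) * ((n : ℂ) - (((K + 1 : ℕ)) : ℂ))) := rfl
  show ambientLap n (fun w => ftil w + lorentzForm n w ^ (K + 1) * g w) z
      = lorentzForm n z ^ (K + 1) * ambientLap n g z
  rw [e0, e1, e2, e3, hgz]
  push_cast
  push_cast at hd
  field_simp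
  have hne : (-1 - (K : ℂ) + n) ≠ 0 := fun h0 => hd (by linear_combination ((K : ℂ) + 1) * h0)
  linear_combination (-(lorentzForm n z ^ K * h z)) * mul_inv_cancel₀ hne
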